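/- arXiv:2403.11109 — 3 statements merged into one kernel-verified Lean document; each statement's English description precedes it below -/
import Mathlib

section
/- For positive real a, the integral ∫₀^∞ x^μ K_ν(a x) dx equals 2^(μ-1) a^(-μ-1) Γ((1+μ+ν)/2) Γ((1+μ-ν)/2), whenever μ+1 > |ν| (so both Gamma arguments are positive). -/
/-!
Substituting the integral representation of `K_ν` and exchanging the order of integration
(the integrand is nonnegative) turns the `x`-integral into a Gamma integral, leaving
`Γ(μ+1) a^(-μ-1) ∫₀^∞ cosh (ν t) cosh t ^ (-μ-1) dt`. That integrand is even, so the integral is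
half of the one over `ℝ`, where `cosh (ν t)` may be replaced by `exp (ν t)`. The logistic
substitution `x = sigmoid (2t)`, for which `x = eᵗ / (2 cosh t)` and `1 - x = e⁻ᵗ / (2 cosh t)`,
turns the latter into the Beta integral `B((μ+1+ν)/2, (μ+1-ν)/2)`.
-/

open MeasureTheory Real Set

/-- The modified Bessel function of the second kind `K_ν(x)`, via its
integral representation (valid for `x > 0`). -/
noncomputable def besselK (ν x : ℝ) : ℝ :=
  ∫ t in Set.Ioi (0 : ℝ), Real.exp (-x * Real.cosh t) * Real.cosh (ν * t)

lemma integral_Ioo_rpow_mul_one_sub_rpow {p q : ℝ} (hp : 0 < p) (hq : 0 < q) :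
    ∫ x in Ioo (0 : ℝ) 1, x ^ (p - 1) * (1 - x) ^ (q - 1) = Gamma p * Gamma q / Gamma (p + q) := by
  have h := Complex.betaIntegral_eq_Gamma_mul_div p q (by simpa using hp) (by simpa using hq)
  rw [Complex.betaIntegral, ← Complex.ofReal_add, Complex.Gamma_ofReal, Complex.Gamma_ofReal,
    Complex.Gamma_ofReal, ← Complex.ofReal_mul, ← Complex.ofReal_div,
    intervalIntegral.integral_of_le zero_le_one, integral_Ioc_eq_integral_Ioo] at h
  rw [← Complex.ofReal_inj, ← h, ← integral_complex_ofReal]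
  refine setIntegral_congr_fun measurableSet_Ioo fun x hx => ?_
  rw [Complex.ofReal_mul, Complex.ofReal_cpow hx.1.le, Complex.ofReal_cpow (sub_nonneg.2 hx.2.le)]
  push_cast
  rfl

lemma integrableOn_Ioo_rpow_mul_one_sub_rpow {p q : ℝ} (hp : 0 < p) (hq : 0 < q) :
    IntegrableOn (fun x : ℝ => x ^ (p - 1) * (1 - x) ^ (q - 1)) (Ioo 0 1) :=
  .of_integral_ne_zero <| by
    rw [integral_Ioo_rpow_mul_one_sub_rpow hp hq]
    have := Gamma_pos_of_pos hp
    have := Gamma_pos_of_pos hq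
    have := Gamma_pos_of_pos (add_pos hp hq)
    positivity

section Sigmoid

variable {E : Type*} [NormedAddCommGroup E] [NormedSpace ℝ E]

lemma abs_sigmoid_mul_one_sub_sigmoid (u : ℝ) :
    |sigmoid u * (1 - sigmoid u)| = sigmoid u * (1 - sigmoid u) :=
  abs_of_pos (mul_pos (sigmoid_pos u) (sub_pos.2 (sigmoid_lt_one u)))

lemma integrable_comp_sigmoid_iff {g : ℝ → E} :
    Integrable (fun u => (sigmoid u * (1 - sigmoid u)) • g (sigmoid u)) ↔
      IntegrableOn g (Ioo 0 1) := by
  have := integrableOn_image_iff_integrableOn_abs_deriv_smul MeasurableSet.univ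
    (fun u _ => (hasDerivAt_sigmoid u).hasDerivWithinAt) sigmoid_injective.injOn g
  simpa only [image_univ, range_sigmoid, abs_sigmoid_mul_one_sub_sigmoid, integrableOn_univ]
    using this.symm

lemma integral_comp_sigmoid (g : ℝ → E) :
    ∫ u, (sigmoid u * (1 - sigmoid u)) • g (sigmoid u) = ∫ x in Ioo 0 1, g x := by
  have := integral_image_eq_integral_abs_deriv_smul MeasurableSet.univ
    (fun u _ => (hasDerivAt_sigmoid u).hasDerivWithinAt) sigmoid_injective.injOn g
  simpa only [image_univ, range_sigmoid, abs_sigmoid_mul_one_sub_sigmoid, Measure.restrict_univ]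
    using this.symm

lemma sigmoid_mul_one_sub_sigmoid_smul_rpow (p q u : ℝ) :
    (sigmoid u * (1 - sigmoid u)) • (sigmoid u ^ (p - 1) * (1 - sigmoid u) ^ (q - 1)) =
      sigmoid u ^ p * (1 - sigmoid u) ^ q := by
  have h0 := sigmoid_pos u
  have h1 := sub_pos.2 (sigmoid_lt_one u)
  rw [smul_eq_mul, rpow_sub_one h0.ne', rpow_sub_one h1.ne']
  field_simp

lemma sigmoid_two_mul (t : ℝ) : sigmoid (2 * t) = exp t / (2 * cosh t) := by
  rw [sigmoid_def, cosh_eq]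
  have := exp_pos t
  have : exp (-(2 * t)) = exp (-t) / exp t := by rw [← exp_sub]; ring_nf
  rw [this]
  field_simp

lemma one_sub_sigmoid_two_mul (t : ℝ) : 1 - sigmoid (2 * t) = exp (-t) / (2 * cosh t) := by
  rw [← sigmoid_neg, ← mul_neg, sigmoid_two_mul, cosh_neg]

lemma sigmoid_two_mul_rpow_mul_one_sub_rpow (m ν t : ℝ) :
    sigmoid (2 * t) ^ ((m + ν) / 2) * (1 - sigmoid (2 * t)) ^ ((m - ν) / 2) =
      exp (ν * t) * (2 * cosh t) ^ (-m) := by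
  have hc : 0 < 2 * cosh t := by positivity
  rw [one_sub_sigmoid_two_mul, sigmoid_two_mul, div_rpow (exp_pos _).le hc.le,
    div_rpow (exp_pos _).le hc.le, ← exp_mul, ← exp_mul, rpow_neg hc.le, div_mul_div_comm,
    ← exp_add, ← rpow_add hc]
  ring_nf

lemma integrable_sigmoid_rpow_mul_one_sub_sigmoid_rpow {p q : ℝ} (hp : 0 < p) (hq : 0 < q) :
    Integrable fun u => sigmoid u ^ p * (1 - sigmoid u) ^ q := by
  simpa only [sigmoid_mul_one_sub_sigmoid_smul_rpow] using
    integrable_comp_sigmoid_iff.2 (integrableOn_Ioo_rpow_mul_one_sub_rpow hp hq)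

lemma integral_sigmoid_rpow_mul_one_sub_sigmoid_rpow {p q : ℝ} (hp : 0 < p) (hq : 0 < q) :
    ∫ u, sigmoid u ^ p * (1 - sigmoid u) ^ q = Gamma p * Gamma q / Gamma (p + q) := by
  simpa only [sigmoid_mul_one_sub_sigmoid_smul_rpow, integral_Ioo_rpow_mul_one_sub_rpow hp hq]
    using integral_comp_sigmoid fun x : ℝ => x ^ (p - 1) * (1 - x) ^ (q - 1)

end Sigmoid

lemma cosh_mul_mul_cosh_rpow_neg (m ν t : ℝ) :
    cosh (ν * t) * cosh t ^ (-m) =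
      2 ^ (m - 1) * (exp (ν * t) * (2 * cosh t) ^ (-m) + exp (-ν * t) * (2 * cosh t) ^ (-m)) := by
  rw [mul_rpow zero_le_two (cosh_pos t).le, cosh_eq, rpow_sub_one two_ne_zero,
    rpow_neg zero_le_two, neg_mul]
  have := rpow_pos_of_pos two_pos m
  field_simp

section CoshPower

variable {m ν : ℝ}

lemma integrable_exp_mul_mul_two_cosh_rpow_neg (h : |ν| < m) :
    Integrable fun t => exp (ν * t) * (2 * cosh t) ^ (-m) := by
  obtain ⟨h₁, h₂⟩ := abs_lt.1 h
  simpa only [sigmoid_two_mul_rpow_mul_one_sub_rpow] using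
    (integrable_sigmoid_rpow_mul_one_sub_sigmoid_rpow (p := (m + ν) / 2) (q := (m - ν) / 2)
      (by linarith) (by linarith)).comp_mul_left' two_ne_zero

lemma integral_exp_mul_mul_two_cosh_rpow_neg (h : |ν| < m) :
    ∫ t, exp (ν * t) * (2 * cosh t) ^ (-m) =
      Gamma ((m + ν) / 2) * Gamma ((m - ν) / 2) / (2 * Gamma m) := by
  obtain ⟨h₁, h₂⟩ := abs_lt.1 h
  simp_rw [← sigmoid_two_mul_rpow_mul_one_sub_rpow m ν]
  rw [Measure.integral_comp_mul_left
      (fun u => sigmoid u ^ ((m + ν) / 2) * (1 - sigmoid u) ^ ((m - ν) / 2)),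
    integral_sigmoid_rpow_mul_one_sub_sigmoid_rpow (by linarith) (by linarith),
    show (m + ν) / 2 + (m - ν) / 2 = m by ring, abs_of_pos (by norm_num), smul_eq_mul]
  ring

lemma integrableOn_Ioi_cosh_mul_mul_cosh_rpow_neg (h : |ν| < m) :
    IntegrableOn (fun t => cosh (ν * t) * cosh t ^ (-m)) (Ioi 0) := by
  simp_rw [cosh_mul_mul_cosh_rpow_neg m ν]
  exact (((integrable_exp_mul_mul_two_cosh_rpow_neg h).add
    (integrable_exp_mul_mul_two_cosh_rpow_neg (by rwa [abs_neg]))).const_mul _).integrableOn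

lemma integral_Ioi_cosh_mul_mul_cosh_rpow_neg (h : |ν| < m) :
    ∫ t in Ioi 0, cosh (ν * t) * cosh t ^ (-m) =
      2 ^ (m - 2) * Gamma ((m + ν) / 2) * Gamma ((m - ν) / 2) / Gamma m := by
  have h_even : ∀ t, cosh (ν * |t|) * cosh |t| ^ (-m) = cosh (ν * t) * cosh t ^ (-m) := by
    intro t
    rcases abs_choice t with ht | ht <;> simp [ht]
  have h_line := integral_comp_abs (f := fun t => cosh (ν * t) * cosh t ^ (-m))
  simp only [h_even] at h_line
  rw [show ∫ t in Ioi 0, cosh (ν * t) * cosh t ^ (-m) = 2⁻¹ * ∫ t, cosh (ν * t) * cosh t ^ (-m) by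
    linarith]
  simp_rw [cosh_mul_mul_cosh_rpow_neg m ν]
  rw [integral_const_mul, integral_add (integrable_exp_mul_mul_two_cosh_rpow_neg h)
    (integrable_exp_mul_mul_two_cosh_rpow_neg (by rwa [abs_neg])),
    integral_exp_mul_mul_two_cosh_rpow_neg h,
    integral_exp_mul_mul_two_cosh_rpow_neg (by rwa [abs_neg]), rpow_sub two_pos, rpow_sub two_pos,
    ← sub_eq_add_neg, sub_neg_eq_add]
  ring

end CoshPower

lemma integral_rpow_mul_exp_neg_mul {μ b : ℝ} (hμ : -1 < μ) (hb : 0 < b) :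
    ∫ x in Ioi 0, x ^ μ * exp (-(b * x)) = Gamma (μ + 1) * b ^ (-(μ + 1)) := by
  have h := integral_rpow_mul_exp_neg_mul_Ioi (a := μ + 1) (by linarith) hb
  rwa [add_sub_cancel_right, one_div, inv_rpow hb.le, ← rpow_neg hb.le, mul_comm] at h

lemma integrableOn_rpow_mul_exp_neg_mul {μ b : ℝ} (hμ : -1 < μ) (hb : 0 < b) :
    IntegrableOn (fun x => x ^ μ * exp (-(b * x))) (Ioi 0) :=
  .of_integral_ne_zero <| by
    rw [integral_rpow_mul_exp_neg_mul hμ hb]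
    have := Gamma_pos_of_pos (neg_lt_iff_pos_add.1 hμ)
    positivity

lemma integral_integral_swap_of_nonneg {α β : Type*} [MeasurableSpace α] [MeasurableSpace β]
    {μ : Measure α} {ν : Measure β} [SFinite μ] [SFinite ν] {f : α → β → ℝ}
    (hf : AEStronglyMeasurable (Function.uncurry f) (μ.prod ν))
    (hf_nonneg : ∀ y, 0 ≤ᵐ[μ] fun x => f x y) (hf_int : ∀ y, Integrable (fun x => f x y) μ)
    (h_int : Integrable (fun y => ∫ x, f x y ∂μ) ν) :
    ∫ x, ∫ y, f x y ∂ν ∂μ = ∫ y, ∫ x, f x y ∂μ ∂ν := by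
  refine integral_integral_swap ((integrable_prod_iff' hf).2 ⟨.of_forall hf_int, h_int.congr ?_⟩)
  exact .of_forall fun y =>
    integral_congr_ae <| (hf_nonneg y).mono fun x hx => (Real.norm_of_nonneg hx).symm

lemma integral_rpow_mul_besselK {a μ ν : ℝ} (ha : 0 < a) (hν : |ν| < μ + 1) :
    ∫ x in Ioi 0, x ^ μ * besselK ν (a * x) =
      Gamma (μ + 1) * a ^ (-(μ + 1)) * ∫ t in Ioi 0, cosh (ν * t) * cosh t ^ (-(μ + 1)) := by
  have hμ : -1 < μ := by linarith [abs_nonneg ν]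
  set F : ℝ → ℝ → ℝ := fun x t => x ^ μ * (exp (-(a * x) * cosh t) * cosh (ν * t))
  have hF : ∀ t x, F x t = x ^ μ * exp (-((a * cosh t) * x)) * cosh (ν * t) := fun t x => by
    simp only [F]
    ring_nf
  have hF_inner : ∀ t, ∫ x in Ioi 0, F x t =
      Gamma (μ + 1) * a ^ (-(μ + 1)) * (cosh (ν * t) * cosh t ^ (-(μ + 1))) := fun t => by
    rw [funext (hF t), integral_mul_const, integral_rpow_mul_exp_neg_mul hμ (by positivity),
      mul_rpow ha.le (cosh_pos t).le]
    ring
  have hF_swap : ∫ x in Ioi 0, ∫ t in Ioi 0, F x t = ∫ t in Ioi 0, ∫ x in Ioi 0, F x t := by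
    refine integral_integral_swap_of_nonneg ?_ (fun t => ?_) (fun t => ?_) ?_
    · exact ((measurable_fst.pow_const μ).mul (by fun_prop : Continuous fun z : ℝ × ℝ =>
        exp (-(a * z.1) * cosh z.2) * cosh (ν * z.2)).measurable).aestronglyMeasurable
    · filter_upwards [ae_restrict_mem measurableSet_Ioi] with x (hx : 0 < x)
      have := rpow_pos_of_pos hx μ
      positivity
    · simp only [hF t]
      exact (integrableOn_rpow_mul_exp_neg_mul hμ (by positivity)).mul_const _
    · simpa only [hF_inner] using
        (integrableOn_Ioi_cosh_mul_mul_cosh_rpow_neg hν).const_mul (Gamma (μ + 1) * a ^ (-(μ + 1)))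
  calc ∫ x in Ioi 0, x ^ μ * besselK ν (a * x) = ∫ x in Ioi 0, ∫ t in Ioi 0, F x t := by
        simp only [F, besselK, integral_const_mul]
    _ = ∫ t in Ioi 0, ∫ x in Ioi 0, F x t := hF_swap
    _ = _ := by simp only [hF_inner, integral_const_mul]

/-- Gradshteyn–Ryzhik 6.561.16:
`∫₀^∞ x^μ K_ν(a x) dx = 2^(μ-1) a^(-μ-1) Γ((1+μ+ν)/2) Γ((1+μ-ν)/2)`
for `a > 0` and `μ + 1 > |ν|`. -/
theorem besselK_integral_moment (a μ ν : ℝ) (ha : 0 < a) (hμν : μ + 1 > |ν|) :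
    ∫ x in Set.Ioi (0 : ℝ), x ^ μ * besselK ν (a * x)
      = 2 ^ (μ - 1) * a ^ (-μ - 1) *
        Real.Gamma ((1 + μ + ν) / 2) * Real.Gamma ((1 + μ - ν) / 2) := by
  have hΓ : 0 < Gamma (1 + μ) := Gamma_pos_of_pos (by linarith [abs_nonneg ν])
  rw [integral_rpow_mul_besselK ha hμν, add_comm μ 1,
    integral_Ioi_cosh_mul_mul_cosh_rpow_neg (by linarith)]
  field_simp
  ring_nf
end

section
/- Let Z be a nonnegative random variable with probability density f_Z(z) = (2/(Γ(Q) (Ω₁Ω₂)^((Q+1)/2))) · z^((Q-1)/2) · K_{Q-1}(2√(z/(Ω₁Ω₂))) on (0,∞), where Q is a positive integer and Ω₁, Ω₂ > 0. Then f_Z is a valid probability density (it integrates to 1) and its cumulative distribution function is F_Z(z) = 1 − (2/Γ(Q)) (z/(Ω₁Ω₂))^(Q/2) K_Q(2√(z/(Ω₁Ω₂))). -/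
/-!
Substituting `y = √u eˢ` in `K_ν(x) = ∫₀^∞ e^{-x cosh t} cosh(νt) dt` gives
`∫₀^∞ y^{ν-1} e^{-y-u/y} dy = 2 u^{ν/2} K_ν(2√u)`. With `ν = Q - 1` this exhibits `f` as a
Gamma mixture of exponential densities, `f(t) = ∫₀^∞ (y^{Q-1} e^{-y} / Γ(Q)) (cy)⁻¹ e^{-t/(cy)} dy`
with `c = Ω₁Ω₂`: `Z` is exponential with mean `cY` given `Y ~ Gamma(Q, 1)`. Exchanging the
integrals, the total mass is that of the Gamma density, and `1 - F(z)` is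
`Γ(Q)⁻¹ ∫₀^∞ y^{Q-1} e^{-y} e^{-z/(cy)} dy`, which is the same Bessel integral with `ν = Q`.
-/

open MeasureTheory Real Set

lemma exp_neg_le_factorial_div_pow {a : ℝ} (ha : 0 < a) (k : ℕ) :
    exp (-a) ≤ k.factorial / a ^ k := by
  rw [exp_neg, ← inv_div]
  exact inv_anti₀ (by positivity) (pow_div_factorial_le_exp _ ha.le k)

lemma integrableOn_rpow_mul_exp_neg_sub_div (ν : ℝ) {u : ℝ} (hu : 0 < u) :
    IntegrableOn (fun y ↦ y ^ (ν - 1) * exp (-y - u / y)) (Ioi 0) := by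
  obtain ⟨k, hk⟩ := exists_nat_gt (-ν)
  refine ((GammaIntegral_convergent (s := ν + k) (by linarith)).const_mul
    (k.factorial / u ^ k)).mono' (by fun_prop)
    ((ae_restrict_iff' measurableSet_Ioi).mpr (.of_forall fun y (hy : 0 < y) ↦ ?_))
  have hexp : exp (-(u / y)) ≤ k.factorial / u ^ k * y ^ k := by
    simpa [div_pow, div_div_eq_mul_div, mul_div_right_comm] using
      exp_neg_le_factorial_div_pow (div_pos hu hy) k
  calc ‖y ^ (ν - 1) * exp (-y - u / y)‖ = y ^ (ν - 1) * exp (-y) * exp (-(u / y)) := by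
        rw [Real.norm_of_nonneg (by positivity), exp_sub, exp_neg (u / y)]; ring
    _ ≤ y ^ (ν - 1) * exp (-y) * (k.factorial / u ^ k * y ^ k) := by gcongr
    _ = k.factorial / u ^ k * (exp (-y) * y ^ (ν + k - 1)) := by
        rw [show ν + k - 1 = ν - 1 + k by ring, rpow_add hy, rpow_natCast]; ring

section ChangeOfVariables

variable {E : Type*} [NormedAddCommGroup E] [NormedSpace ℝ E] {a : ℝ}

lemma image_univ_const_mul_exp (ha : 0 < a) : (fun s ↦ a * exp s) '' univ = Ioi 0 := by
  rw [image_univ, ← image_univ, ← image_image (a * ·), image_univ, range_exp,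
    image_const_mul_Ioi_zero ha]

lemma injOn_const_mul_exp (ha : 0 < a) : InjOn (fun s ↦ a * exp s) univ :=
  fun _ _ _ _ h ↦ exp_injective (mul_left_cancel₀ ha.ne' h)

lemma integral_Ioi_zero_eq_integral_const_mul_exp (ha : 0 < a) (g : ℝ → E) :
    ∫ y in Ioi 0, g y = ∫ s, (a * exp s) • g (a * exp s) := by
  simpa [image_univ_const_mul_exp ha, abs_of_pos (mul_pos ha (exp_pos _))] using
    integral_image_eq_integral_abs_deriv_smul MeasurableSet.univ
      (fun s _ ↦ ((hasDerivAt_exp s).const_mul a).hasDerivWithinAt) (injOn_const_mul_exp ha) g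

lemma integrableOn_Ioi_zero_iff_integrable_const_mul_exp (ha : 0 < a) (g : ℝ → E) :
    IntegrableOn g (Ioi 0) ↔ Integrable fun s ↦ (a * exp s) • g (a * exp s) := by
  simpa [image_univ_const_mul_exp ha, abs_of_pos (mul_pos ha (exp_pos _))] using
    integrableOn_image_iff_integrableOn_abs_deriv_smul MeasurableSet.univ
      (fun s _ ↦ ((hasDerivAt_exp s).const_mul a).hasDerivWithinAt) (injOn_const_mul_exp ha) g

end ChangeOfVariables

lemma integral_exp_neg_mul_cosh_mul_exp_eq_two_mul_besselK {ν x : ℝ}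
    (hint : Integrable fun s ↦ exp (-x * cosh s) * exp (ν * s)) :
    ∫ s, exp (-x * cosh s) * exp (ν * s) = 2 * besselK ν x := by
  have hreflect : ∫ s, exp (-x * cosh s) * exp (-ν * s) =
      ∫ s, exp (-x * cosh s) * exp (ν * s) := by
    rw [← integral_neg_eq_self]; simp
  have hint' : Integrable fun s ↦ exp (-x * cosh s) * exp (-ν * s) := by
    simpa using hint.comp_neg
  calc ∫ s, exp (-x * cosh s) * exp (ν * s)
      = ((∫ s, exp (-x * cosh s) * exp (ν * s)) +
          ∫ s, exp (-x * cosh s) * exp (-ν * s)) / 2 := by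
        rw [hreflect, add_self_div_two]
    _ = ∫ s, exp (-x * cosh |s|) * cosh (ν * |s|) := by
        rw [← integral_add hint hint', ← integral_div]
        congr 1 with s
        have hcosh : cosh (ν * |s|) = cosh (ν * s) := by
          rcases abs_choice s with h | h <;> simp [h]
        rw [cosh_abs, hcosh, cosh_eq (ν * s), neg_mul ν]; ring
    _ = 2 * besselK ν x := integral_comp_abs (f := fun t ↦ exp (-x * cosh t) * cosh (ν * t))

lemma sqrt_mul_exp_smul_rpow_mul_exp_neg_sub_div {u : ℝ} (hu : 0 < u) (ν s : ℝ) :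
    (√u * exp s) • ((√u * exp s) ^ (ν - 1) * exp (-(√u * exp s) - u / (√u * exp s))) =
      u ^ (ν / 2) * (exp (-(2 * √u) * cosh s) * exp (ν * s)) := by
  have hy : 0 < √u * exp s := by positivity
  have hpow : (√u * exp s) ^ ν = u ^ (ν / 2) * exp (ν * s) := by
    rw [mul_rpow (sqrt_nonneg u) (exp_pos s).le, sqrt_eq_rpow, ← rpow_mul hu.le, ← exp_mul,
      one_div_mul_eq_div, mul_comm s]
  have hexp : -(√u * exp s) - u / (√u * exp s) = -(2 * √u) * cosh s := by
    rw [cosh_eq, exp_neg]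
    field_simp
    rw [sq_sqrt hu.le]; ring
  rw [smul_eq_mul, rpow_sub_one hy.ne', hpow, hexp]
  field_simp

lemma integral_rpow_mul_exp_neg_sub_div (ν : ℝ) {u : ℝ} (hu : 0 < u) :
    ∫ y in Ioi 0, y ^ (ν - 1) * exp (-y - u / y) = 2 * u ^ (ν / 2) * besselK ν (2 * √u) := by
  have hsqrt : 0 < √u := sqrt_pos.mpr hu
  have hint := (integrableOn_Ioi_zero_iff_integrable_const_mul_exp hsqrt _).mp
    (integrableOn_rpow_mul_exp_neg_sub_div ν hu)
  simp_rw [sqrt_mul_exp_smul_rpow_mul_exp_neg_sub_div hu] at hint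
  rw [integral_Ioi_zero_eq_integral_const_mul_exp hsqrt]
  simp_rw [sqrt_mul_exp_smul_rpow_mul_exp_neg_sub_div hu]
  rw [integral_const_mul, integral_exp_neg_mul_cosh_mul_exp_eq_two_mul_besselK
    ((integrable_const_mul_iff (rpow_pos_of_pos hu _).ne'.isUnit _).mp hint)]
  ring

lemma integrableOn_Ioi_zero_mul_exp_neg_mul {r : ℝ} (hr : 0 < r) :
    IntegrableOn (fun t ↦ r * exp (-(r * t))) (Ioi 0) := by
  simp_rw [← neg_mul]
  exact (integrableOn_exp_mul_Ioi (neg_neg_of_pos hr) 0).const_mul r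

lemma integral_Ioi_zero_mul_exp_neg_mul {r : ℝ} (hr : 0 < r) :
    ∫ t in Ioi 0, r * exp (-(r * t)) = 1 := by
  simp_rw [← neg_mul]
  rw [integral_const_mul, integral_exp_mul_Ioi (neg_neg_of_pos hr)]
  field_simp
  simp

lemma integral_Ioc_zero_mul_exp_neg_mul {r : ℝ} (hr : 0 < r) {z : ℝ} (hz : 0 ≤ z) :
    ∫ t in Ioc 0 z, r * exp (-(r * t)) = 1 - exp (-(r * z)) := by
  rw [← intervalIntegral.integral_of_le hz,
    ← intervalIntegral.integral_Ioi_sub_Ioi (integrableOn_Ioi_zero_mul_exp_neg_mul hr) hz,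
    integral_Ioi_zero_mul_exp_neg_mul hr]
  simp_rw [← neg_mul]
  rw [integral_const_mul, integral_exp_mul_Ioi (neg_neg_of_pos hr)]
  field_simp

lemma setIntegral_integral_exponential_mixture_swap {β : Type*} [MeasurableSpace β]
    {μ : Measure β} [SFinite μ] {p r : β → ℝ} (hp : Integrable p μ) (hr : Measurable r)
    (hr0 : ∀ᵐ y ∂μ, 0 < r y) {S : Set ℝ} (hS : S ⊆ Ioi 0) :
    ∫ t in S, (∫ y, p y * (r y * exp (-(r y * t))) ∂μ) =
      ∫ y, p y * (∫ t in S, r y * exp (-(r y * t))) ∂μ := by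
  have hmeas : AEStronglyMeasurable (fun q : β × ℝ ↦ p q.1 * (r q.1 * exp (-(r q.1 * q.2))))
      (μ.prod (volume.restrict S)) :=
    (hp.aestronglyMeasurable.comp_fst (ν := volume.restrict S)).mul
      (by fun_prop : Measurable fun q : β × ℝ ↦ r q.1 * exp (-(r q.1 * q.2))).aestronglyMeasurable
  have hle : ∀ᵐ y ∂μ, ∫ t in S, r y * exp (-(r y * t)) ≤ 1 := by
    filter_upwards [hr0] with y hy
    calc ∫ t in S, r y * exp (-(r y * t)) ≤ ∫ t in Ioi 0, r y * exp (-(r y * t)) :=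
          setIntegral_mono_set (integrableOn_Ioi_zero_mul_exp_neg_mul hy)
            (.of_forall fun t ↦ mul_nonneg hy.le (exp_pos _).le) hS.eventuallyLE
      _ = 1 := integral_Ioi_zero_mul_exp_neg_mul hy
  have hprod : Integrable (fun q : β × ℝ ↦ p q.1 * (r q.1 * exp (-(r q.1 * q.2))))
      (μ.prod (volume.restrict S)) := by
    refine (integrable_prod_iff hmeas).mpr ⟨?_, hp.norm.mono' hmeas.norm.integral_prod_right' ?_⟩
    · filter_upwards [hr0] with y hy
      exact ((integrableOn_Ioi_zero_mul_exp_neg_mul hy).mono_set hS).const_mul _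
    · filter_upwards [hr0, hle] with y hy hy1
      have hg : ∀ t, ‖r y * exp (-(r y * t))‖ = r y * exp (-(r y * t)) :=
        fun t ↦ norm_of_nonneg (mul_nonneg hy.le (exp_pos _).le)
      simp_rw [norm_mul (p y), hg]
      rw [integral_const_mul, norm_of_nonneg (by positivity)]
      exact mul_le_of_le_one_right (norm_nonneg _) hy1
  rw [← integral_integral_swap hprod]
  simp_rw [integral_const_mul]

lemma exp_neg_mul_rpow_mul_exp_neg_inv_mul (ν c z y : ℝ) :
    exp (-y) * y ^ (ν - 1) * exp (-((c * y)⁻¹ * z)) = y ^ (ν - 1) * exp (-y - z / c / y) := by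
  rw [mul_right_comm, ← exp_add, mul_comm, div_div, div_eq_inv_mul, ← sub_eq_add_neg]

lemma cascaded_density_eq_gamma_mixture_exponential {a c t : ℝ} (hc : 0 < c) (ht : 0 < t) :
    2 / (Gamma a * c ^ ((a + 1) / 2)) * t ^ ((a - 1) / 2) * besselK (a - 1) (2 * √(t / c)) =
      (Gamma a)⁻¹ *
        ∫ y in Ioi 0, exp (-y) * y ^ (a - 1) * ((c * y)⁻¹ * exp (-((c * y)⁻¹ * t))) := by
  have hmix : ∫ y in Ioi 0, exp (-y) * y ^ (a - 1) * ((c * y)⁻¹ * exp (-((c * y)⁻¹ * t))) =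
      c⁻¹ * ∫ y in Ioi 0, y ^ (a - 1 - 1) * exp (-y - t / c / y) := by
    rw [← integral_const_mul]
    refine setIntegral_congr_fun measurableSet_Ioi fun y (hy : 0 < y) ↦ ?_
    rw [← exp_neg_mul_rpow_mul_exp_neg_inv_mul, ← sub_add_cancel (a - 1) 1,
      rpow_add_one hy.ne', add_sub_cancel_right]
    field_simp
  rw [hmix, integral_rpow_mul_exp_neg_sub_div _ (div_pos ht hc), div_rpow ht.le hc.le,
    show (a + 1) / 2 = (a - 1) / 2 + 1 by ring, rpow_add_one hc.ne']
  have : 0 < c ^ ((a - 1) / 2) := rpow_pos_of_pos hc _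
  field_simp

/-- The cascaded-Rayleigh density
`f_Z(z) = (2/(Γ(Q)(Ω₁Ω₂)^((Q+1)/2))) z^((Q-1)/2) K_{Q-1}(2√(z/(Ω₁Ω₂)))`
integrates to 1 on `(0,∞)`, and its CDF is
`F_Z(z) = 1 − (2/Γ(Q)) (z/(Ω₁Ω₂))^(Q/2) K_Q(2√(z/(Ω₁Ω₂)))`. -/
theorem cascaded_rayleigh_density_and_cdf (Q : ℕ) (hQ : 1 ≤ Q) (Ω₁ Ω₂ : ℝ)
    (hΩ₁ : 0 < Ω₁) (hΩ₂ : 0 < Ω₂)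
    (f : ℝ → ℝ)
    (hf : ∀ z, 0 < z → f z =
      (2 / (Real.Gamma Q * (Ω₁ * Ω₂) ^ (((Q : ℝ) + 1) / 2))) *
        z ^ (((Q : ℝ) - 1) / 2) * besselK ((Q : ℝ) - 1) (2 * Real.sqrt (z / (Ω₁ * Ω₂)))) :
    (∫ z in Set.Ioi (0 : ℝ), f z = 1) ∧
    (∀ z, 0 < z → ∫ t in Set.Ioc (0 : ℝ) z, f t =
      1 - (2 / Real.Gamma Q) * (z / (Ω₁ * Ω₂)) ^ ((Q : ℝ) / 2) *
        besselK (Q : ℝ) (2 * Real.sqrt (z / (Ω₁ * Ω₂)))) := by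
  set c := Ω₁ * Ω₂
  have hc : 0 < c := mul_pos hΩ₁ hΩ₂
  have hQ0 : (0 : ℝ) < Q := Nat.cast_pos.mpr hQ
  have hΓ : Gamma Q ≠ 0 := (Gamma_pos_of_pos hQ0).ne'
  have hmass : ∀ S ⊆ Ioi 0, MeasurableSet S → ∫ t in S, f t = (Gamma Q)⁻¹ *
      ∫ y in Ioi 0, exp (-y) * y ^ ((Q : ℝ) - 1) *
        ∫ t in S, (c * y)⁻¹ * exp (-((c * y)⁻¹ * t)) := by
    intro S hS hSm
    rw [setIntegral_congr_fun hSm fun t ht ↦ (hf t (hS ht)).trans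
      (cascaded_density_eq_gamma_mixture_exponential hc (hS ht)), integral_const_mul,
      setIntegral_integral_exponential_mixture_swap (GammaIntegral_convergent hQ0) (by fun_prop)
        ((ae_restrict_iff' measurableSet_Ioi).mpr (.of_forall fun y (hy : 0 < y) ↦ by positivity)) hS]
  constructor
  · rw [hmass _ subset_rfl measurableSet_Ioi, setIntegral_congr_fun measurableSet_Ioi
      fun y (hy : 0 < y) ↦ by rw [integral_Ioi_zero_mul_exp_neg_mul (by positivity), mul_one],
      ← Gamma_eq_integral hQ0, inv_mul_cancel₀ hΓ]
  · intro z hz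
    have hsurvival := integrableOn_rpow_mul_exp_neg_sub_div (Q : ℝ) (div_pos hz hc)
    simp_rw [← exp_neg_mul_rpow_mul_exp_neg_inv_mul _ c] at hsurvival
    rw [hmass _ Ioc_subset_Ioi_self measurableSet_Ioc, setIntegral_congr_fun measurableSet_Ioi
      fun y (hy : 0 < y) ↦ by rw [integral_Ioc_zero_mul_exp_neg_mul (by positivity) hz.le,
      mul_sub, mul_one], integral_sub (GammaIntegral_convergent hQ0) hsurvival,
      ← Gamma_eq_integral hQ0]
    simp_rw [exp_neg_mul_rpow_mul_exp_neg_inv_mul]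
    rw [integral_rpow_mul_exp_neg_sub_div _ (div_pos hz hc)]
    field_simp
end

section
/- Let F(x) = 1 − (2/Γ(Q)) (c x)^(Q/2) K_Q(2√(c x)) for x > 0, with Q ≥ 2 an integer and c > 0. Then lim_{x→0⁺} F(x)/x = c/(Q−1). -/
open MeasureTheory Real Set Filter Topology

/-!
Substituting `t = √a eˢ` and folding the integral over `ℝ` onto `(0, ∞)` gives the
representation `2 (√a)^ν K_ν(2√a) = ∫₀^∞ e^{-t} t^{ν-1} e^{-a/t} dt`. Hence
`Γ(ν) F(x) = ∫₀^∞ e^{-t} t^{ν-1} (1 - e^{-cx/t}) dt`, and since `0 ≤ 1 - e^{-u} ≤ u`,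
dominated convergence with the majorant `c e^{-t} t^{ν-2}`, integrable because `ν > 1`,
yields `F(x)/x → c Γ(ν-1)/Γ(ν) = c/(ν-1)`.
-/

theorem integral_exp_mul_eq_two_mul_integral_Ioi_mul_cosh (ν : ℝ) {f : ℝ → ℝ}
    (hf : ∀ s, f (-s) = f s) (hint : Integrable fun s => exp (ν * s) * f s) :
    ∫ s, exp (ν * s) * f s = 2 * ∫ s in Ioi 0, f s * cosh (ν * s) := by
  have hint_neg : Integrable fun s => exp (-(ν * s)) * f s := by
    simpa [hf] using hint.comp_neg
  have hreflect : ∫ s, exp (-(ν * s)) * f s = ∫ s, exp (ν * s) * f s := by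
    simpa [hf] using integral_neg_eq_self (fun s => exp (ν * s) * f s) volume
  have heven : ∀ s, f |s| * cosh (ν * |s|) = f s * cosh (ν * s) := by
    intro s
    rcases abs_choice s with h | h <;> simp [h, hf]
  calc ∫ s, exp (ν * s) * f s
      = ((∫ s, exp (ν * s) * f s) + ∫ s, exp (-(ν * s)) * f s) / 2 := by rw [hreflect]; ring
    _ = ∫ s, f s * cosh (ν * s) := by
        rw [← integral_add hint hint_neg, ← integral_div]
        simp only [cosh_eq]
        congr 1 with s
        ring
    _ = 2 * ∫ s in Ioi 0, f s * cosh (ν * s) := by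
        rw [← integral_comp_abs (f := fun s => f s * cosh (ν * s))]
        simp only [heven]

theorem integrableOn_Gamma_integrand_mul_exp_neg_div {ν a : ℝ} (hν : 0 < ν) (ha : 0 ≤ a) :
    IntegrableOn (fun t => exp (-t) * t ^ (ν - 1) * exp (-(a / t))) (Ioi 0) := by
  refine (GammaIntegral_convergent hν).mul_bdd (c := 1) (by fun_prop) ?_
  filter_upwards [ae_restrict_mem measurableSet_Ioi] with t (ht : 0 < t)
  rw [norm_of_nonneg (exp_nonneg _), exp_le_one_iff, neg_nonpos]
  positivity

theorem integral_Gamma_integrand_mul_exp_neg_div {ν a : ℝ} (hν : 0 < ν) (ha : 0 < a) :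
    ∫ t in Ioi 0, exp (-t) * t ^ (ν - 1) * exp (-(a / t))
      = 2 * √a ^ ν * besselK ν (2 * √a) := by
  set r := √a
  have hr : 0 < r := sqrt_pos.mpr ha
  have hra : r ^ 2 = a := sq_sqrt ha.le
  have himage : (fun s => r * exp s) '' univ = Ioi 0 := by
    rw [image_univ, ← mul_zero r, ← image_mul_left_Ioi hr, ← range_exp, ← range_comp]
    rfl
  have hderiv : ∀ s ∈ univ, HasDerivWithinAt (fun s => r * exp s) (r * exp s) univ s :=
    fun s _ => ((hasDerivAt_exp s).const_mul r).hasDerivWithinAt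
  have hinj : InjOn (fun s => r * exp s) univ :=
    fun s _ s' _ h => exp_injective (mul_left_cancel₀ hr.ne' h)
  have hsubst : ∀ s, |r * exp s| • (exp (-(r * exp s)) * (r * exp s) ^ (ν - 1) *
      exp (-(a / (r * exp s)))) = r ^ ν * (exp (ν * s) * exp (-(2 * r) * cosh s)) := by
    intro s
    have hpow : |r * exp s| * (r * exp s) ^ (ν - 1) = r ^ ν * exp (ν * s) := by
      rw [abs_of_pos (by positivity), mul_comm, ← rpow_add_one (by positivity), sub_add_cancel,
        mul_rpow hr.le (exp_pos s).le, ← exp_mul, mul_comm s]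
    have hexp : exp (-(r * exp s)) * exp (-(a / (r * exp s))) = exp (-(2 * r) * cosh s) := by
      rw [← exp_add, cosh_eq, exp_neg, ← hra]
      congr 1
      field_simp
      ring
    rw [smul_eq_mul, ← hexp]
    linear_combination (exp (-(r * exp s)) * exp (-(a / (r * exp s)))) * hpow
  have hint := integrableOn_Gamma_integrand_mul_exp_neg_div hν ha.le
  rw [← himage, integrableOn_image_iff_integrableOn_abs_deriv_smul MeasurableSet.univ hderiv hinj]
    at hint
  rw [← himage, integral_image_eq_integral_abs_deriv_smul MeasurableSet.univ hderiv hinj]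
  simp only [hsubst, integrableOn_univ, Measure.restrict_univ] at hint ⊢
  rw [integral_const_mul, integral_exp_mul_eq_two_mul_integral_Ioi_mul_cosh ν
    (fun s => by rw [cosh_neg]) ((integrable_const_mul_iff (isUnit_iff_ne_zero.mpr
      (rpow_pos_of_pos hr ν).ne') _).mp hint), besselK]
  ring

theorem one_sub_rpow_mul_besselK_eq_integral {ν y : ℝ} (hν : 0 < ν) (hy : 0 < y) :
    1 - 2 / Gamma ν * y ^ (ν / 2) * besselK ν (2 * √y)
      = (∫ t in Ioi 0, exp (-t) * t ^ (ν - 1) * (1 - exp (-(y / t)))) / Gamma ν := by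
  have hpow : y ^ (ν / 2) = √y ^ ν := by
    rw [sqrt_eq_rpow, ← rpow_mul hy.le]
    ring_nf
  have hsplit : ∫ t in Ioi 0, exp (-t) * t ^ (ν - 1) * (1 - exp (-(y / t)))
      = Gamma ν - 2 * √y ^ ν * besselK ν (2 * √y) := by
    simp only [mul_one_sub]
    rw [integral_sub (GammaIntegral_convergent hν)
      (integrableOn_Gamma_integrand_mul_exp_neg_div hν hy.le), ← Gamma_eq_integral hν,
      integral_Gamma_integrand_mul_exp_neg_div hν hy]
  rw [hsplit, hpow]
  field_simp [(Gamma_pos_of_pos hν).ne']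

theorem tendsto_one_sub_exp_neg_mul_div (b : ℝ) :
    Tendsto (fun x => (1 - exp (-(b * x))) / x) (𝓝[>] 0) (𝓝 b) := by
  have hderiv : HasDerivAt (fun x => 1 - exp (-(b * x))) b 0 := by
    simpa using (((hasDerivAt_id (0 : ℝ)).const_mul b).neg.exp).const_sub 1
  simpa [div_eq_inv_mul] using hderiv.tendsto_slope_zero_right

theorem one_sub_exp_neg_mem_Icc {u : ℝ} (hu : 0 ≤ u) : 1 - exp (-u) ∈ Icc 0 u :=
  ⟨sub_nonneg.mpr (exp_le_one_iff.mpr (neg_nonpos.mpr hu)), by linarith [one_sub_le_exp_neg u]⟩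

theorem tendsto_integral_Gamma_integrand_mul_one_sub_exp_neg_div {ν c : ℝ} (hν : 1 < ν)
    (hc : 0 ≤ c) :
    Tendsto (fun x => ∫ t in Ioi 0, exp (-t) * t ^ (ν - 1) * (1 - exp (-(c * x / t))) / x)
      (𝓝[>] 0) (𝓝 (c * Gamma (ν - 1))) := by
  have hmajorant : ∀ t, 0 < t →
      c * (exp (-t) * t ^ (ν - 1 - 1)) = exp (-t) * t ^ (ν - 1) * (c / t) :=
    fun t ht => by rw [rpow_sub_one ht.ne']; ring
  rw [Gamma_eq_integral (by linarith), ← integral_const_mul]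
  refine tendsto_integral_filter_of_dominated_convergence _
    (Eventually.of_forall fun x => by fun_prop) ?_
    ((GammaIntegral_convergent (by linarith : 0 < ν - 1)).const_mul c) ?_
  · filter_upwards [self_mem_nhdsWithin] with x (hx : 0 < x)
    filter_upwards [ae_restrict_mem measurableSet_Ioi] with t (ht : 0 < t)
    obtain ⟨h0, h1⟩ := one_sub_exp_neg_mem_Icc (by positivity : 0 ≤ c * x / t)
    rw [norm_of_nonneg (by positivity), hmajorant t ht, div_le_iff₀ hx]
    calc exp (-t) * t ^ (ν - 1) * (1 - exp (-(c * x / t)))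
        ≤ exp (-t) * t ^ (ν - 1) * (c * x / t) := by gcongr
      _ = exp (-t) * t ^ (ν - 1) * (c / t) * x := by ring
  · filter_upwards [ae_restrict_mem measurableSet_Ioi] with t (ht : 0 < t)
    rw [hmajorant t ht]
    simpa [mul_div_assoc, div_mul_eq_mul_div] using
      (tendsto_one_sub_exp_neg_mul_div (c / t)).const_mul (exp (-t) * t ^ (ν - 1))

/-- For `Q ≥ 2` and `c > 0`, the CDF
`F(x) = 1 − (2/Γ(Q))(cx)^(Q/2) K_Q(2√(cx))` satisfies
`lim_{x→0⁺} F(x)/x = c/(Q−1)`. -/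
theorem cascaded_cdf_asymptotic (Q : ℕ) (hQ : 2 ≤ Q) (c : ℝ) (hc : 0 < c) :
    Tendsto (fun x : ℝ =>
        (1 - (2 / Real.Gamma Q) * (c * x) ^ ((Q : ℝ) / 2) *
          besselK (Q : ℝ) (2 * Real.sqrt (c * x))) / x)
      (nhdsWithin 0 (Set.Ioi 0)) (nhds (c / ((Q : ℝ) - 1))) := by
  have hQ1 : (1 : ℝ) < Q := by exact_mod_cast hQ
  have hlimit : c * Gamma (Q - 1) / Gamma Q = c / (Q - 1) := by
    have hΓ : Gamma Q = (Q - 1) * Gamma (Q - 1) := by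
      rw [← Gamma_add_one (by linarith), sub_add_cancel]
    rw [hΓ]
    field_simp [(Gamma_pos_of_pos (sub_pos.mpr hQ1)).ne']
  rw [← hlimit]
  refine ((tendsto_integral_Gamma_integrand_mul_one_sub_exp_neg_div hQ1 hc.le).div_const
    (Gamma Q)).congr' ?_
  filter_upwards [self_mem_nhdsWithin] with x (hx : 0 < x)
  rw [one_sub_rpow_mul_besselK_eq_integral (by linarith) (mul_pos hc hx), integral_div]
  ring
end
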